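/- Suppose q is odd. For every 0 ≤ ℓ ≤ t−1 one has b_ℓ = β_ℓ(a,b)·β_{ℓ−1}(a,b)⁻¹ and β_ℓ(a,b) = b₀·b₁⋯b_ℓ (the product of the terms b₀ through b_ℓ of the sequence (b_ℓ)). -/

import Mathlib

open Polynomial

noncomputable section

abbrev SL2 (F : Type*) [Field F] := Matrix.SpecialLinearGroup (Fin 2) F

abbrev PSL2 (F : Type*) [Field F] := SL2 F ⧸ Subgroup.center (SL2 F)

/-- image in `PSL₂(F)` of the matrix `[[1, x], [0, 1]]`. -/
def uu {F : Type*} [Field F] (x : F) : PSL2 F :=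
  QuotientGroup.mk ⟨!![1, x; 0, 1], by simp [Matrix.det_fin_two_of]⟩

/-- image in `PSL₂(F)` of the matrix `[[y, 0], [0, y⁻¹]]`. -/
def hh {F : Type*} [Field F] (y : F) (hy : y ≠ 0) : PSL2 F :=
  QuotientGroup.mk ⟨!![y, 0; 0, y⁻¹], by simp [Matrix.det_fin_two_of, mul_inv_cancel₀ hy]⟩

/-- image in `PSL₂(F)` of the matrix `[[0, 1], [-1, 0]]`. -/
def ss {F : Type*} [Field F] : PSL2 F :=
  QuotientGroup.mk ⟨!![0, 1; -1, 0], by simp [Matrix.det_fin_two_of]⟩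

/-- the sequence `a_k`: `a₁ = a`, `a_{k+1} = a - a_k⁻¹` (with junk value `a₀ = 0`). -/
def aSeq {F : Type*} [Field F] (a : F) : ℕ → F
  | 0 => 0
  | k + 1 => a - (aSeq a k)⁻¹

/-- the sequence `b_ℓ`: `b₀ = b`, `b_{ℓ+1} = a - b_ℓ⁻¹`. -/
def bSeq {F : Type*} [Field F] (a b : F) : ℕ → F
  | 0 => b
  | k + 1 => a - (bSeq a b k)⁻¹

/-- `alph a n = α_{n-1}(a)`, the (index-shifted) Dickson polynomial of the second
kind values: `α_{-1} = 0`, `α₀ = 1`, `α_{n+1} = a·α_n - α_{n-1}`. -/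
def alph {F : Type*} [Field F] (a : F) : ℕ → F
  | 0 => 0
  | 1 => 1
  | n + 2 => a * alph a (n + 1) - alph a n

/-- `bet a b n = β_{n-1}(a,b)`: `β_{-1} = 1`, `β_n = b·α_n - α_{n-1}` for `n ≥ 0`. -/
def bet {F : Type*} [Field F] (a b : F) : ℕ → F
  | 0 => 1
  | n + 1 => b * alph a (n + 1) - alph a n

/-- `gam a b n = γ_{n-1}(a,b)` where `γ_n = α_n + b·β_n`. -/
def gam {F : Type*} [Field F] (a b : F) (n : ℕ) : F := alph a n + b * bet a b n

/-!
The map `x ↦ a - x⁻¹` is the projective action of `[[a, -1], [1, 0]]`, so `b_ℓ = β_ℓ / β_{ℓ-1}`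
holds, and the product of the `b_i` telescopes, as long as no `β_n` vanishes. Writing `a = -(ω + ω⁻¹)`, one has
`α_{n-1}(a) = ±(ω^n - ω^{-n}) / (ω - ω⁻¹)`, which vanishes exactly when `t ∣ n` because `ω` has order
`2t`. The addition formula for `α` then shows that `β_{n-1}(a,b) = 0` with `0 < n < t` forces
`b = a_{t-n}`, which is excluded.
-/

section Recurrences

variable {F : Type*} [Field F] (a b : F)

theorem alph_succ_succ (n : ℕ) : alph a (n + 2) = a * alph a (n + 1) - alph a n := rfl

theorem alph_add_succ (m n : ℕ) :
    alph a (m + n + 1) = alph a (m + 1) * alph a (n + 1) - alph a m * alph a n := by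
  induction n using Nat.twoStepInduction with
  | zero => simp [alph]
  | one => simp [alph, mul_comm]
  | more n ih₀ ih₁ =>
    rw [show m + (n + 2) + 1 = m + n + 1 + 2 by ring, alph_succ_succ, alph_succ_succ a (n + 1)]
    linear_combination a * ih₁ - ih₀ + alph a m * alph_succ_succ a n

theorem bet_succ_succ (n : ℕ) : bet a b (n + 2) = a * bet a b (n + 1) - bet a b n := by
  cases n with
  | zero => simp only [bet, alph]; ring
  | succ n =>
    simp only [bet, alph_succ_succ a (n + 1), alph_succ_succ a n]
    ring

theorem bet_self (n : ℕ) : bet a a n = alph a (n + 1) := by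
  cases n with
  | zero => rfl
  | succ n => rfl

theorem aSeq_succ (k : ℕ) : aSeq a (k + 1) = bSeq a a k := by
  induction k with
  | zero => simp [aSeq, bSeq]
  | succ k ih => rw [aSeq, ih, bSeq]

theorem bSeq_eq_bet_div {l : ℕ} (h : ∀ n ≤ l, bet a b n ≠ 0) :
    bSeq a b l = bet a b (l + 1) / bet a b l := by
  induction l with
  | zero => simp [bSeq, bet, alph]
  | succ l ih =>
    have hl : bet a b (l + 1) ≠ 0 := h (l + 1) le_rfl
    rw [bSeq, ih fun n hn => h n (by omega), inv_div, bet_succ_succ]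
    field_simp

theorem bet_succ_eq_prod_bSeq {l : ℕ} (h : ∀ n ≤ l, bet a b n ≠ 0) :
    bet a b (l + 1) = ∏ i ∈ Finset.range (l + 1), bSeq a b i := by
  induction l with
  | zero => simp [bSeq, bet, alph]
  | succ l ih =>
    have hl : bet a b (l + 1) ≠ 0 := h (l + 1) le_rfl
    rw [Finset.prod_range_succ, ← ih fun n hn => h n (by omega), bSeq_eq_bet_div a b h]
    field_simp

theorem aSeq_eq_alph_div {k : ℕ} (hk : 0 < k) (h : ∀ n, 0 < n → n ≤ k → alph a n ≠ 0) :
    aSeq a k = alph a (k + 1) / alph a k := by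
  obtain ⟨j, rfl⟩ := Nat.exists_eq_add_of_lt hk
  rw [zero_add, aSeq_succ, bSeq_eq_bet_div a a fun n hn => by
    rw [bet_self]; exact h (n + 1) n.succ_pos (by omega), bet_self, bet_self]

theorem bet_ne_zero {t : ℕ} (ht : alph a t = 0) (hα : ∀ n, 0 < n → n < t → alph a n ≠ 0)
    (hb : ∀ k, 1 ≤ k → k ≤ t - 1 → b ≠ aSeq a k) {n : ℕ} (hn : n < t) : bet a b n ≠ 0 := by
  intro hβ
  cases n with
  | zero => exact one_ne_zero hβ
  | succ k =>
    obtain ⟨j, rfl⟩ : ∃ j, t = j + k + 1 := ⟨t - k - 1, by omega⟩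
    have hk : alph a (k + 1) ≠ 0 := hα (k + 1) k.succ_pos hn
    have hj : alph a j ≠ 0 := hα j (by omega) (by omega)
    have hbk : alph a k = b * alph a (k + 1) := by rw [bet] at hβ; linear_combination -hβ
    have hsym : alph a (j + 1) = b * alph a j := by
      apply mul_right_cancel₀ hk
      linear_combination -(ht.symm.trans (alph_add_succ a j k)) + alph a j * hbk
    refine hb j (by omega) (by omega) ?_
    rw [aSeq_eq_alph_div a (by omega) fun n h0 hn => hα n h0 (by omega), hsym,
      mul_div_cancel_right₀ _ hj]

end Recurrences

section Roots

variable {F K : Type*} [Field F] {a : F}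

theorem alph_mul_eq_of_aeval_eq_zero [CommRing K] [Algebra F K] {ω : K}
    (hω : aeval ω (X ^ 2 + C a * X + 1 : F[X]) = 0) (n : ℕ) :
    algebraMap F K (alph a n) * (ω ^ 2 - 1) * ω ^ n = (-1) ^ (n + 1) * (ω ^ (2 * n) - 1) * ω := by
  have hc : algebraMap F K a * ω = -(ω ^ 2 + 1) := by
    simp only [map_add, map_pow, map_mul, aeval_X, aeval_C, map_one] at hω
    linear_combination hω
  induction n using Nat.twoStepInduction with
  | zero => simp [alph]
  | one => simp [alph]
  | more n ih₀ ih₁ =>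
    rw [alph_succ_succ, map_sub, map_mul]
    linear_combination algebraMap F K (alph a (n + 1)) * (ω ^ 2 - 1) * ω ^ (n + 1) * hc
      - (ω ^ 2 + 1) * ih₁ - ω ^ 2 * ih₀

theorem alph_eq_zero_iff_pow_eq_one [Field K] [Algebra F K] {ω : K}
    (hω : aeval ω (X ^ 2 + C a * X + 1 : F[X]) = 0) (hω2 : ω ^ 2 ≠ 1) (n : ℕ) :
    alph a n = 0 ↔ ω ^ (2 * n) = 1 := by
  have hω0 : ω ≠ 0 := by rintro rfl; simp at hω
  have key := alph_mul_eq_of_aeval_eq_zero hω n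
  rw [← map_eq_zero (algebraMap F K), ← sub_eq_zero (a := ω ^ (2 * n))]
  constructor
  · intro h
    rw [h] at key
    simpa [hω0] using key.symm
  · intro h
    rw [h] at key
    simpa [hω0, sub_eq_zero, hω2] using key

end Roots

theorem stmt10_general (F : Type*) [Field F] [Fintype F] (q : ℕ) (hq : Fintype.card F = q)
    (a : F)
    (ω : AlgebraicClosure F) (hroot : aeval ω (X ^ 2 + C a * X + 1 : F[X]) = 0)
    (hord : orderOf ω = q + 1)
    (hqodd : Odd q) (t : ℕ) (ht : t = (q + 1) / Nat.gcd 2 (q + 1)) (b : F)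
    (hb : ∀ k : ℕ, 1 ≤ k → k ≤ t - 1 → b ≠ aSeq a k) :
    ∀ l : ℕ, l ≤ t - 1 →
      bSeq a b l = bet a b (l + 1) * (bet a b l)⁻¹ ∧
      bet a b (l + 1) = ∏ i ∈ Finset.range (l + 1), bSeq a b i := by
  have hq2 : 2 ≤ q := hq ▸ Fintype.one_lt_card
  have htq : q + 1 = 2 * t := by
    rw [Nat.gcd_eq_left (even_iff_two_dvd.mp hqodd.add_one)] at ht
    obtain ⟨m, rfl⟩ := hqodd
    omega
  have hω2 : ω ^ 2 ≠ 1 := fun h => by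
    have := orderOf_le_of_pow_eq_one two_pos h
    omega
  have hα (n : ℕ) : alph a n = 0 ↔ t ∣ n := by
    rw [alph_eq_zero_iff_pow_eq_one hroot hω2, ← orderOf_dvd_iff_pow_eq_one, hord, htq,
      Nat.mul_dvd_mul_iff_left two_pos]
  have hβ : ∀ n ≤ t - 1, bet a b n ≠ 0 := fun n hn =>
    bet_ne_zero a b ((hα t).2 dvd_rfl)
      (fun m hm0 hmt hm => Nat.not_dvd_of_pos_of_lt hm0 hmt ((hα m).1 hm)) hb (by omega)
  intro l hl
  have hβl : ∀ n ≤ l, bet a b n ≠ 0 := fun n hn => hβ n (hn.trans hl)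
  exact ⟨by rw [bSeq_eq_bet_div a b hβl, div_eq_mul_inv], bet_succ_eq_prod_bSeq a b hβl⟩

theorem stmt10 (F : Type*) [Field F] [Fintype F] (q : ℕ) (hq : Fintype.card F = q)
    (a : F) (hirr : Irreducible (X ^ 2 + C a * X + 1 : F[X]))
    (ω : AlgebraicClosure F) (hroot : aeval ω (X ^ 2 + C a * X + 1 : F[X]) = 0)
    (hord : orderOf ω = q + 1)
    (hqodd : Odd q) (t : ℕ) (ht : t = (q + 1) / Nat.gcd 2 (q + 1)) (b : F)
    (hb : ∀ k : ℕ, 1 ≤ k → k ≤ t - 1 → b ≠ aSeq a k) :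
    ∀ l : ℕ, l ≤ t - 1 →
      bSeq a b l = bet a b (l + 1) * (bet a b l)⁻¹ ∧
      bet a b (l + 1) = ∏ i ∈ Finset.range (l + 1), bSeq a b i :=
  stmt10_general F q hq a ω hroot hord hqodd t ht b hb

end
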